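/- Let μ be an ε-product probability measure on V = V₁×⋯×V_k, let f : V → ℝ, let S ⊆ [k], and set g = f^{=S}. Then: (1) for every T ⊆ [k] with T ≠ S, ‖g^{=T}‖₂² ≤ 2^{8k}·ε²·‖f‖₂²; and (2) ‖g^{=S} − g‖₂² ≤ 2^{10k}·ε²·‖f‖₂². -/

import Mathlib

/-!
For a product measure `A_T A_S = A_{S ∩ T}`, and the signed expansion of `(f^{=S})^{=T}` into the
`A_{T'} A_{S'} f` (`T' ⊆ T`, `S' ⊆ S`) collapses by inclusion–exclusion to `[T = S] f^{=S}`. For an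
`ε`-product measure the same expansion writes `(f^{=S})^{=T} - [T = S] f^{=S}` as a signed sum of
at most `4^k` defects `A_{T'} A_{S'} f - A_{S' ∩ T'} f`, each of norm at most `k² ε ‖f‖`; since
`4^k k² ≤ 2^{4k}`, squaring gives both bounds.

The defect bound is proved in the links `μ_x`, `x ∈ V_{S' ∩ T'}`, where it measures how far
averaging an `S' ∖ T'`-junta over the disjoint coordinates `T' ∖ S'` moves it. Averaging over one
coordinate `i` moves a junta on `S` by at most `|S| ε` standard deviations: the variance of the
average is a covariance between a function of `x_i` and the junta, which is bounded one coordinate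
of `S` at a time using the law of total covariance and the `ε`-pseudorandomness of the
two-coordinate skeletons of the links.
-/

open Finset

namespace GLL

variable {k : ℕ} {V : Fin k → Type} [∀ i, Fintype (V i)] [∀ i, DecidableEq (V i)]

/-- Expectation of `f` with respect to the (finitely supported) measure `μ`. -/
def expect (μ f : (∀ i, V i) → ℝ) : ℝ := ∑ x, μ x * f x

/-- `μ` is a probability measure. -/
def IsProb (μ : (∀ i, V i) → ℝ) : Prop := (∀ x, 0 ≤ μ x) ∧ ∑ x, μ x = 1

/-- The marginal `μ_S` evaluated at (the `S`-coordinates of) `x`. -/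
def marg (μ : (∀ i, V i) → ℝ) (S : Finset (Fin k)) (x : ∀ i, V i) : ℝ :=
  ∑ z, if ∀ i ∈ S, z i = x i then μ z else 0

/-- The link (conditional) measure `μ_x` for `x ∈ V_S`, viewed as a measure on
full points agreeing with `x` on `S`. -/
noncomputable def cond (μ : (∀ i, V i) → ℝ) (S : Finset (Fin k)) (x z : ∀ i, V i) : ℝ :=
  if ∀ i ∈ S, z i = x i then μ z / marg μ S x else 0

/-- The averaging operator `A_S`: `A_S f (x) = E_{y ∼ μ_{x_S}} [f(x_S, y)]`.
Applied to an `S'`-junta `f`, this is also the operator `A_{S',S}`. -/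
noncomputable def Aop (μ : (∀ i, V i) → ℝ) (S : Finset (Fin k)) (f : (∀ i, V i) → ℝ)
    (x : ∀ i, V i) : ℝ :=
  ∑ z, cond μ S x z * f z

/-- The Efron–Stein component `f^{=S} = ∑_{T ⊆ S} (-1)^{|S∖T|} A_T f`. -/
noncomputable def ES (μ : (∀ i, V i) → ℝ) (S : Finset (Fin k)) (f : (∀ i, V i) → ℝ)
    (x : ∀ i, V i) : ℝ :=
  ∑ T ∈ S.powerset, (-1 : ℝ) ^ (S.card - T.card) * Aop μ T f x

/-- The low-degree part `f^{≤ d} = ∑_{|S| ≤ d} f^{=S}`. -/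
noncomputable def lowPart (μ : (∀ i, V i) → ℝ) (d : ℕ) (f : (∀ i, V i) → ℝ)
    (x : ∀ i, V i) : ℝ :=
  ∑ S ∈ univ.powerset.filter (fun S : Finset (Fin k) => S.card ≤ d), ES μ S f x

/-- The Laplacian `L_S[f] = ∑_{T ⊇ S} f^{=T}`. -/
noncomputable def Lap (μ : (∀ i, V i) → ℝ) (S : Finset (Fin k)) (f : (∀ i, V i) → ℝ)
    (x : ∀ i, V i) : ℝ :=
  ∑ T ∈ univ.powerset.filter (fun T : Finset (Fin k) => S ⊆ T), ES μ T f x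

/-- The truncated Laplacian `L_S^{≤d}[f] = ∑_{T ⊇ S, |T| ≤ d} f^{=T}`. -/
noncomputable def LapLe (μ : (∀ i, V i) → ℝ) (d : ℕ) (S : Finset (Fin k))
    (f : (∀ i, V i) → ℝ) (x : ∀ i, V i) : ℝ :=
  ∑ T ∈ univ.powerset.filter (fun T : Finset (Fin k) => S ⊆ T ∧ T.card ≤ d), ES μ T f x

/-- The influence `I_{S,x}[f] = ‖L_S[f](x,·)‖²_{L²(μ_x)}`. -/
noncomputable def Inf (μ : (∀ i, V i) → ℝ) (S : Finset (Fin k)) (f : (∀ i, V i) → ℝ)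
    (x : ∀ i, V i) : ℝ :=
  ∑ z, cond μ S x z * (Lap μ S f z) ^ 2

/-- The truncated influence `I^{≤d}_{S,x}[f] = ‖L_S^{≤d}[f](x,·)‖²_{L²(μ_x)}`. -/
noncomputable def InfLe (μ : (∀ i, V i) → ℝ) (d : ℕ) (S : Finset (Fin k))
    (f : (∀ i, V i) → ℝ) (x : ∀ i, V i) : ℝ :=
  ∑ z, cond μ S x z * (LapLe μ d S f z) ^ 2

/-- `‖f‖₂²` with respect to `μ`. -/
def normSq (μ f : (∀ i, V i) → ℝ) : ℝ := ∑ x, μ x * (f x) ^ 2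

/-- `‖f‖₄⁴` with respect to `μ`. -/
def norm4p4 (μ f : (∀ i, V i) → ℝ) : ℝ := ∑ x, μ x * (f x) ^ 4

/-- `‖f‖₂` with respect to `μ`. -/
noncomputable def l2norm (μ f : (∀ i, V i) → ℝ) : ℝ := Real.sqrt (normSq μ f)

/-- `‖f‖_∞`: the maximum of `|f|` over the support of `μ`. -/
noncomputable def supNorm (μ f : (∀ i, V i) → ℝ) : ℝ :=
  sSup ((fun x => |f x|) '' {x | 0 < μ x})

/-- Inner product `⟨f, g⟩ = E_{x∼μ}[f(x) g(x)]`. -/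
def inner' (μ f g : (∀ i, V i) → ℝ) : ℝ := ∑ x, μ x * (f x * g x)

/-- The pair `{i,j}`-skeleton of `μ` is `ε`-pseudorandom. -/
def PairPseudo (μ : (∀ i, V i) → ℝ) (ε : ℝ) (i j : Fin k) : Prop :=
  ∀ (f₁ : V i → ℝ) (f₂ : V j → ℝ),
    |expect μ (fun x => f₁ (x i) * f₂ (x j)) -
        expect μ (fun x => f₁ (x i)) * expect μ (fun x => f₂ (x j))| ≤
      ε * Real.sqrt
        ((expect μ (fun x => f₁ (x i) ^ 2) - expect μ (fun x => f₁ (x i)) ^ 2) *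
          (expect μ (fun x => f₂ (x j) ^ 2) - expect μ (fun x => f₂ (x j)) ^ 2))

/-- `μ` is an `ε`-product measure: every link of every restriction of size `≤ k - 2`
has `ε`-pseudorandom skeletons. -/
def EpsProduct (μ : (∀ i, V i) → ℝ) (ε : ℝ) : Prop :=
  ∀ S : Finset (Fin k), S.card ≤ k - 2 → ∀ x, 0 < marg μ S x →
    ∀ i j : Fin k, i ∉ S → j ∉ S → i ≠ j → PairPseudo (cond μ S x) ε i j

/-- `‖f(x,·)‖_{L²(μ_x)}` for `x ∈ V_S`. -/
noncomputable def restrictNorm (μ : (∀ i, V i) → ℝ) (S : Finset (Fin k)) (x : ∀ i, V i)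
    (f : (∀ i, V i) → ℝ) : ℝ :=
  Real.sqrt (∑ z, cond μ S x z * (f z) ^ 2)

/-- `f` is `(d, δ)`-global: all restrictions of at most `d` coordinates have
`2`-norm at most `δ`. -/
def IsGlobal (μ : (∀ i, V i) → ℝ) (d : ℕ) (δ : ℝ) (f : (∀ i, V i) → ℝ) : Prop :=
  ∀ S : Finset (Fin k), S.card ≤ d → ∀ x, 0 < marg μ S x → restrictNorm μ S x f ≤ δ

/-- `f` is an `S`-junta: it depends only on the coordinates in `S`. -/
def Junta (S : Finset (Fin k)) (f : (∀ i, V i) → ℝ) : Prop :=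
  ∀ x y, (∀ i ∈ S, x i = y i) → f x = f y

/-- The noise operator `T_ρ f = ∑_{S ⊆ [k]} ρ^{|S|} (1-ρ)^{k-|S|} A_S f`. -/
noncomputable def noiseOp (μ : (∀ i, V i) → ℝ) (ρ : ℝ) (f : (∀ i, V i) → ℝ)
    (x : ∀ i, V i) : ℝ :=
  ∑ S ∈ (univ : Finset (Fin k)).powerset, ρ ^ S.card * (1 - ρ) ^ (k - S.card) * Aop μ S f x

/-- The up-down walk operator `T = (1/k) ∑_{i=1}^k A_{[k]∖{i}}`. -/
noncomputable def upDown (μ : (∀ i, V i) → ℝ) (f : (∀ i, V i) → ℝ) (x : ∀ i, V i) : ℝ :=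
  (1 / (k : ℝ)) * ∑ i : Fin k, Aop μ (univ.erase i) f x

/-- The product measure `μ₁ ⊗ ⋯ ⊗ μ_k`. -/
def prodMeasure (μi : ∀ i, V i → ℝ) : (∀ i, V i) → ℝ := fun x => ∏ i, μi i (x i)

/-- `f` has degree at most `d`: `f^{=S} = 0` whenever `|S| > d`. -/
def DegLe (μ : (∀ i, V i) → ℝ) (d : ℕ) (f : (∀ i, V i) → ℝ) : Prop :=
  ∀ S : Finset (Fin k), d < S.card → ∀ x, ES μ S f x = 0

/-- `{F S}_{S ⊆ [k]}` is an `(α, ε')`-approximate Efron–Stein decomposition of `f`. -/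
noncomputable def ApproxES (μ : (∀ i, V i) → ℝ) (α ε' : ℝ) (f : (∀ i, V i) → ℝ)
    (F : Finset (Fin k) → (∀ i, V i) → ℝ) : Prop :=
  l2norm μ f ≤ α ∧
    l2norm μ (fun x => f x - ∑ S ∈ (univ : Finset (Fin k)).powerset, F S x) ≤ ε' ∧
    ∀ S : Finset (Fin k), ∃ h : (∀ i, V i) → ℝ,
      l2norm μ h ≤ α ∧ l2norm μ (fun x => ES μ S h x - F S x) ≤ ε'

end GLL

namespace GLL

section Coordinates

variable {k : ℕ} {V : Fin k → Type} {R S : Finset (Fin k)}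

lemma agree_iff_of_agree {x z : ∀ i, V i} (hxy : ∀ i ∈ R, x i = z i) (w : ∀ i, V i) :
    (∀ i ∈ R, w i = x i) ↔ (∀ i ∈ R, w i = z i) :=
  ⟨fun h i hi => (h i hi).trans (hxy i hi), fun h i hi => (h i hi).trans (hxy i hi).symm⟩

lemma Junta.mono {g : (∀ i, V i) → ℝ} (hg : Junta R g) (hRS : R ⊆ S) : Junta S g :=
  fun x y hxy => hg x y fun i hi => hxy i (hRS hi)

end Coordinates

section Expectation

variable {k : ℕ} {V : Fin k → Type} [∀ i, Fintype (V i)] {ν : (∀ i, V i) → ℝ}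

def var (ν f : (∀ i, V i) → ℝ) : ℝ := expect ν (fun x => f x ^ 2) - expect ν f ^ 2

noncomputable def sd (ν f : (∀ i, V i) → ℝ) : ℝ := Real.sqrt (var ν f)

def cov (ν f g : (∀ i, V i) → ℝ) : ℝ :=
  expect ν (fun x => f x * g x) - expect ν f * expect ν g

lemma expect_congr_support {f g : (∀ i, V i) → ℝ} (h : ∀ x, ν x ≠ 0 → f x = g x) :
    expect ν f = expect ν g :=
  sum_congr rfl fun x _ => by by_cases hx : ν x = 0 <;> simp [hx, h]

lemma cov_congr_support {f f' g g' : (∀ i, V i) → ℝ} (hf : ∀ x, ν x ≠ 0 → f x = f' x)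
    (hg : ∀ x, ν x ≠ 0 → g x = g' x) : cov ν f g = cov ν f' g' := by
  have hfg : ∀ x, ν x ≠ 0 → f x * g x = f' x * g' x := fun x hx => by rw [hf x hx, hg x hx]
  rw [cov, cov, expect_congr_support hf, expect_congr_support hg, expect_congr_support hfg]

lemma sd_congr_support {f f' : (∀ i, V i) → ℝ} (hf : ∀ x, ν x ≠ 0 → f x = f' x) :
    sd ν f = sd ν f' := by
  have hf2 : ∀ x, ν x ≠ 0 → f x ^ 2 = f' x ^ 2 := fun x hx => by rw [hf x hx]
  rw [sd, sd, var, var, expect_congr_support hf, expect_congr_support hf2]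

lemma l2norm_congr_support {f f' : (∀ i, V i) → ℝ} (hf : ∀ x, ν x ≠ 0 → f x = f' x) :
    l2norm ν f = l2norm ν f' :=
  congrArg Real.sqrt (expect_congr_support (g := fun x => f' x ^ 2) fun x hx => by rw [hf x hx])

lemma cov_self (f : (∀ i, V i) → ℝ) : cov ν f f = var ν f := by
  simp only [cov, var, sq]

lemma var_le_normSq (f : (∀ i, V i) → ℝ) : var ν f ≤ normSq ν f :=
  sub_le_self _ (sq_nonneg _)

lemma sd_le_l2norm (f : (∀ i, V i) → ℝ) : sd ν f ≤ l2norm ν f :=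
  Real.sqrt_le_sqrt (var_le_normSq f)

lemma normSq_nonneg (hν : ∀ x, 0 ≤ ν x) (f : (∀ i, V i) → ℝ) : 0 ≤ normSq ν f :=
  sum_nonneg fun x _ => mul_nonneg (hν x) (sq_nonneg _)

lemma sq_l2norm (hν : ∀ x, 0 ≤ ν x) (f : (∀ i, V i) → ℝ) : l2norm ν f ^ 2 = normSq ν f :=
  Real.sq_sqrt (normSq_nonneg hν f)

lemma l2norm_const_mul (c : ℝ) (f : (∀ i, V i) → ℝ) :
    l2norm ν (fun x => c * f x) = |c| * l2norm ν f := by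
  rw [l2norm, l2norm, ← Real.sqrt_sq_eq_abs, ← Real.sqrt_mul (sq_nonneg c), normSq, normSq,
    mul_sum]
  exact congrArg Real.sqrt (sum_congr rfl fun x _ => by ring)

lemma abs_expect_mul_le (hν : ∀ x, 0 ≤ ν x) (f g : (∀ i, V i) → ℝ) :
    |expect ν (fun x => f x * g x)| ≤ l2norm ν f * l2norm ν g := by
  rw [l2norm, l2norm, ← Real.sqrt_mul (normSq_nonneg hν f), ← Real.sqrt_sq_eq_abs]
  refine Real.sqrt_le_sqrt (sum_sq_le_sum_mul_sum_of_sq_le_mul _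
    (fun x _ => mul_nonneg (hν x) (sq_nonneg _)) (fun x _ => mul_nonneg (hν x) (sq_nonneg _))
    fun x _ => le_of_eq (by ring))

lemma l2norm_add_le (hν : ∀ x, 0 ≤ ν x) (f g : (∀ i, V i) → ℝ) :
    l2norm ν (fun x => f x + g x) ≤ l2norm ν f + l2norm ν g := by
  rw [l2norm, Real.sqrt_le_left (y := l2norm ν f + l2norm ν g)
    (add_nonneg (Real.sqrt_nonneg _) (Real.sqrt_nonneg _))]
  have hexp : normSq ν (fun x => f x + g x)
      = normSq ν f + 2 * expect ν (fun x => f x * g x) + normSq ν g := by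
    simp only [normSq, expect, mul_sum, ← sum_add_distrib]
    exact sum_congr rfl fun x _ => by ring
  nlinarith [sq_l2norm hν f, sq_l2norm hν g, le_abs_self (expect ν (fun x => f x * g x)),
    abs_expect_mul_le hν f g]

lemma l2norm_sum_le (hν : ∀ x, 0 ≤ ν x) {ι : Type*} (s : Finset ι)
    (F : ι → (∀ i, V i) → ℝ) :
    l2norm ν (fun x => ∑ t ∈ s, F t x) ≤ ∑ t ∈ s, l2norm ν (F t) := by
  induction s using Finset.cons_induction with
  | empty => simp [l2norm, normSq]
  | cons a s ha ih =>
    simp only [sum_cons]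
    exact (l2norm_add_le hν _ _).trans (by gcongr)

lemma abs_expect_le (hν : ∀ x, 0 ≤ ν x) {F G : (∀ i, V i) → ℝ}
    (h : ∀ x, ν x ≠ 0 → |F x| ≤ G x) : |expect ν F| ≤ expect ν G := by
  refine (abs_sum_le_sum_abs _ _).trans (sum_le_sum fun x _ => ?_)
  rw [abs_mul, abs_of_nonneg (hν x)]
  by_cases hx : ν x = 0
  · simp [hx]
  · exact mul_le_mul_of_nonneg_left (h x hx) (hν x)

lemma expect_le_expect (hν : ∀ x, 0 ≤ ν x) {F G : (∀ i, V i) → ℝ}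
    (h : ∀ x, ν x ≠ 0 → F x ≤ G x) : expect ν F ≤ expect ν G :=
  sum_le_sum fun x _ => by
    by_cases hx : ν x = 0
    · simp [hx]
    · exact mul_le_mul_of_nonneg_left (h x hx) (hν x)

lemma expect_mul_const_left (c : ℝ) (F : (∀ i, V i) → ℝ) :
    expect ν (fun x => c * F x) = c * expect ν F := by
  simp only [expect, mul_sum]
  exact sum_congr rfl fun x _ => by ring

lemma cov_eq_expect_centered (hν : IsProb ν) (f g : (∀ i, V i) → ℝ) :
    cov ν f g = expect ν (fun x => (f x - expect ν f) * (g x - expect ν g)) := by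
  symm
  calc expect ν (fun x => (f x - expect ν f) * (g x - expect ν g))
      = ∑ x, (ν x * (f x * g x) - expect ν g * (ν x * f x) - expect ν f * (ν x * g x)
          + expect ν f * expect ν g * ν x) := sum_congr rfl fun x _ => by ring
    _ = cov ν f g := by
        rw [sum_add_distrib, sum_sub_distrib, sum_sub_distrib, ← mul_sum, ← mul_sum, ← mul_sum,
          hν.2]
        simp only [cov, expect]
        ring

lemma var_eq_normSq_sub (hν : IsProb ν) (f : (∀ i, V i) → ℝ) :
    var ν f = normSq ν (fun x => f x - expect ν f) := by
  rw [← cov_self, cov_eq_expect_centered hν]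
  simp only [expect, normSq, sq]

lemma var_nonneg (hν : IsProb ν) (f : (∀ i, V i) → ℝ) : 0 ≤ var ν f :=
  (var_eq_normSq_sub hν f).symm ▸ normSq_nonneg hν.1 _

lemma sd_eq_l2norm_sub (hν : IsProb ν) (f : (∀ i, V i) → ℝ) :
    sd ν f = l2norm ν (fun x => f x - expect ν f) :=
  congrArg Real.sqrt (var_eq_normSq_sub hν f)

lemma abs_cov_le (hν : IsProb ν) (f g : (∀ i, V i) → ℝ) : |cov ν f g| ≤ sd ν f * sd ν g := by
  rw [cov_eq_expect_centered hν, sd_eq_l2norm_sub hν, sd_eq_l2norm_sub hν]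
  exact abs_expect_mul_le hν.1 _ _

lemma cov_const_right (hν : ∑ x, ν x = 1) (f : (∀ i, V i) → ℝ) (c : ℝ) :
    cov ν f (fun _ => c) = 0 := by
  simp only [cov, expect, ← mul_assoc, ← sum_mul, hν]
  ring

lemma sd_le_of_var_le {f : (∀ i, V i) → ℝ} {c : ℝ} (hc : 0 ≤ c)
    (h : var ν f ≤ c * sd ν f) : sd ν f ≤ c := by
  rcases le_or_gt 0 (var ν f) with hv | hv
  · have hsq : sd ν f ^ 2 = var ν f := Real.sq_sqrt hv
    nlinarith [Real.sqrt_nonneg (var ν f)]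
  · rw [sd, Real.sqrt_eq_zero'.2 hv.le]
    exact hc

end Expectation

section Links

variable {k : ℕ} {V : Fin k → Type} [∀ i, Fintype (V i)] [∀ i, DecidableEq (V i)]
  {ν : (∀ i, V i) → ℝ} {R Q S : Finset (Fin k)} {x z : ∀ i, V i}

lemma marg_nonneg (hν : ∀ x, 0 ≤ ν x) (R : Finset (Fin k)) (x : ∀ i, V i) :
    0 ≤ marg ν R x :=
  sum_nonneg fun z _ => by split_ifs <;> simp [hν z]

lemma le_marg (hν : ∀ x, 0 ≤ ν x) (R : Finset (Fin k)) (x : ∀ i, V i) : ν x ≤ marg ν R x := by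
  have := single_le_sum (f := fun z => if ∀ i ∈ R, z i = x i then ν z else 0)
    (fun z _ => by split_ifs <;> simp [hν z]) (mem_univ x)
  simpa [marg] using this

lemma marg_ne_zero (hν : ∀ x, 0 ≤ ν x) (hx : ν x ≠ 0) (R : Finset (Fin k)) :
    marg ν R x ≠ 0 :=
  (((hν x).lt_of_ne' hx).trans_le (le_marg hν R x)).ne'

lemma cond_nonneg (hν : ∀ x, 0 ≤ ν x) (R : Finset (Fin k)) (x z : ∀ i, V i) :
    0 ≤ cond ν R x z := by
  unfold cond
  split_ifs
  exacts [div_nonneg (hν z) (marg_nonneg hν R x), le_rfl]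

lemma of_cond_ne_zero (h : cond ν R x z ≠ 0) : ν z ≠ 0 ∧ ∀ i ∈ R, z i = x i := by
  unfold cond at h
  split_ifs at h with hz
  · exact ⟨fun h0 => h (by simp [h0]), hz⟩
  · exact absurd rfl h

lemma cond_of_marg_eq_zero (hM : marg ν R x = 0) (z : ∀ i, V i) : cond ν R x z = 0 := by
  simp [cond, hM]

lemma isProb_cond (hν : ∀ x, 0 ≤ ν x) (hM : marg ν R x ≠ 0) : IsProb (cond ν R x) := by
  have hcond : ∀ w, cond ν R x w = (if ∀ i ∈ R, w i = x i then ν w else 0) / marg ν R x :=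
    fun w => by unfold cond; split_ifs <;> simp
  refine ⟨cond_nonneg hν R x, ?_⟩
  simp only [hcond, ← sum_div]
  exact div_self hM

lemma marg_congr (hxy : ∀ i ∈ R, x i = z i) : marg ν R x = marg ν R z := by
  simp only [marg, agree_iff_of_agree hxy]

lemma cond_congr (hxy : ∀ i ∈ R, x i = z i) : cond ν R x = cond ν R z := by
  funext w
  simp only [cond, marg_congr hxy, agree_iff_of_agree hxy]

lemma mul_cond_comm (x z : ∀ i, V i) : ν x * cond ν R x z = ν z * cond ν R z x := by
  by_cases h : ∀ i ∈ R, z i = x i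
  · have h' : ∀ i ∈ R, x i = z i := fun i hi => (h i hi).symm
    rw [cond, cond, if_pos h, if_pos h', marg_congr h']
    ring
  · have h' : ¬ ∀ i ∈ R, x i = z i := fun hc => h fun i hi => (hc i hi).symm
    simp [cond, h, h']

lemma Aop_junta (ν : (∀ i, V i) → ℝ) (R : Finset (Fin k)) (f : (∀ i, V i) → ℝ) :
    Junta R (Aop ν R f) := fun x y hxy => by
  simp only [Aop, cond_congr hxy]

lemma Junta.eq_of_cond_ne_zero {g : (∀ i, V i) → ℝ} (hg : Junta R g) (hz : cond ν R x z ≠ 0) :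
    g z = g x :=
  hg z x (of_cond_ne_zero hz).2

lemma Aop_of_junta (hν : ∀ x, 0 ≤ ν x) {h : (∀ i, V i) → ℝ} (hh : Junta R h) (hz : ν z ≠ 0) :
    Aop ν R h z = h z := by
  calc Aop ν R h z = ∑ w, cond ν R z w * h z :=
        sum_congr rfl fun w _ => by
          by_cases hw : cond ν R z w = 0
          · simp [hw]
          · rw [hh.eq_of_cond_ne_zero hw]
    _ = h z := by rw [← sum_mul, (isProb_cond hν (marg_ne_zero hν hz R)).2, one_mul]

lemma expect_Aop_mul (hν : ∀ x, 0 ≤ ν x) {h : (∀ i, V i) → ℝ} (hh : Junta R h)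
    (f : (∀ i, V i) → ℝ) :
    expect ν (fun x => Aop ν R f x * h x) = expect ν (fun x => f x * h x) := by
  calc expect ν (fun x => Aop ν R f x * h x)
      = ∑ z, ∑ x, ν x * cond ν R x z * (f z * h x) := by
        simp only [expect, Aop, sum_mul, mul_sum]
        rw [sum_comm]
        exact sum_congr rfl fun z _ => sum_congr rfl fun x _ => by ring
    _ = ∑ z, f z * (ν z * Aop ν R h z) := by
        refine sum_congr rfl fun z _ => ?_
        simp only [Aop, mul_sum]
        exact sum_congr rfl fun x _ => by rw [mul_cond_comm]; ring
    _ = expect ν (fun x => f x * h x) := by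
        refine sum_congr rfl fun z _ => ?_
        by_cases hz : ν z = 0
        · simp [hz]
        · rw [Aop_of_junta hν hh hz]; ring

lemma expect_Aop (hν : ∀ x, 0 ≤ ν x) (R : Finset (Fin k)) (f : (∀ i, V i) → ℝ) :
    expect ν (Aop ν R f) = expect ν f := by
  simpa using expect_Aop_mul hν (h := fun _ => 1) (fun _ _ _ => rfl) f

lemma normSq_Aop_le (hν : ∀ x, 0 ≤ ν x) (R : Finset (Fin k)) (f : (∀ i, V i) → ℝ) :
    normSq ν (Aop ν R f) ≤ normSq ν f := by
  have hself : normSq ν (Aop ν R f) = expect ν (fun x => f x * Aop ν R f x) := by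
    rw [← expect_Aop_mul hν (Aop_junta ν R f)]
    simp only [normSq, expect, sq]
  have hcs := (le_abs_self _).trans (abs_expect_mul_le hν f (Aop ν R f))
  rw [← hself, ← sq_l2norm hν, ← sq_l2norm hν] at *
  nlinarith [Real.sqrt_nonneg (normSq ν f), Real.sqrt_nonneg (normSq ν (Aop ν R f))]

lemma cov_Aop_Aop (hν : ∀ x, 0 ≤ ν x) (Q : Finset (Fin k)) (u g : (∀ i, V i) → ℝ) :
    cov ν (Aop ν Q u) (Aop ν Q g) = cov ν (Aop ν Q u) g := by
  have h := expect_Aop_mul hν (Aop_junta ν Q u) g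
  simp only [cov, expect_Aop hν, mul_comm (Aop ν Q u _)] at h ⊢
  rw [h]

lemma var_cond_nonneg (hν : ∀ x, 0 ≤ ν x) (Q : Finset (Fin k)) (z : ∀ i, V i)
    (g : (∀ i, V i) → ℝ) : 0 ≤ var (cond ν Q z) g := by
  by_cases hM : marg ν Q z = 0
  · simp [var, expect, cond_of_marg_eq_zero hM]
  · exact var_nonneg (isProb_cond hν hM) g

lemma cov_eq_cov_Aop_add (hν : IsProb ν) (Q : Finset (Fin k)) (u g : (∀ i, V i) → ℝ) :
    cov ν u g = cov ν (Aop ν Q u) g + expect ν (fun z => cov (cond ν Q z) u g) := by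
  have hlink : expect ν (fun z => cov (cond ν Q z) u g)
      = expect ν (fun x => u x * g x) - expect ν (fun x => Aop ν Q u x * Aop ν Q g x) := by
    have h := expect_Aop hν.1 Q (fun x => u x * g x)
    simp only [expect, Aop] at h ⊢
    rw [← h, ← sum_sub_distrib]
    exact sum_congr rfl fun z _ => by rw [cov, expect, expect, expect]; ring
  rw [hlink, ← cov_Aop_Aop hν.1]
  simp only [cov, expect_Aop hν.1]
  ring

lemma expect_var_cond_le (hν : IsProb ν) (Q : Finset (Fin k)) (g : (∀ i, V i) → ℝ) :
    expect ν (fun z => var (cond ν Q z) g) ≤ var ν g := by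
  have h := cov_eq_cov_Aop_add hν Q g g
  rw [← cov_Aop_Aop hν.1] at h
  simp only [cov_self] at h
  linarith [var_nonneg hν (Aop ν Q g)]

lemma expect_sd_mul_sd_cond_le (hν : IsProb ν) (Q : Finset (Fin k)) (u g : (∀ i, V i) → ℝ) :
    expect ν (fun z => sd (cond ν Q z) u * sd (cond ν Q z) g) ≤ sd ν u * sd ν g := by
  have hsd : ∀ f, l2norm ν (fun z => sd (cond ν Q z) f) ≤ sd ν f := fun f => by
    refine Real.sqrt_le_sqrt ((le_of_eq ?_).trans (expect_var_cond_le hν Q f))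
    exact sum_congr rfl fun z _ => by dsimp only; rw [sd, Real.sq_sqrt (var_cond_nonneg hν.1 Q z f)]
  calc _ ≤ l2norm ν (fun z => sd (cond ν Q z) u) * l2norm ν (fun z => sd (cond ν Q z) g) :=
        (le_abs_self _).trans (abs_expect_mul_le hν.1 _ _)
    _ ≤ sd ν u * sd ν g :=
        mul_le_mul (hsd u) (hsd g) (Real.sqrt_nonneg _) (Real.sqrt_nonneg _)

lemma eq_zero_of_marg_eq_zero (hν : ∀ x, 0 ≤ ν x) (hM : marg ν R x = 0)
    (hz : ∀ i ∈ R, z i = x i) : ν z = 0 := by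
  have := (sum_eq_zero_iff_of_nonneg fun w _ => ?_).1 hM z (mem_univ z)
  · rwa [if_pos hz] at this
  · split_ifs <;> simp [hν w]

lemma cond_cond (hν : ∀ x, 0 ≤ ν x) (hz : ∀ i ∈ R, z i = x i) :
    cond (cond ν R x) Q z = cond ν (R ∪ Q) z := by
  have hiff : ∀ w : ∀ i, V i,
      ((∀ i ∈ Q, w i = z i) ∧ ∀ i ∈ R, w i = x i) ↔ ∀ i ∈ R ∪ Q, w i = z i := fun w => by
    rw [forall_mem_union, ← agree_iff_of_agree (fun i hi => (hz i hi).symm) w]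
    exact and_comm
  have hmarg : marg (cond ν R x) Q z = marg ν (R ∪ Q) z / marg ν R x := by
    simp only [marg, cond, sum_div]
    refine sum_congr rfl fun w _ => ?_
    simp only [← hiff w]
    by_cases hQ : ∀ i ∈ Q, w i = z i
    · by_cases hR : ∀ i ∈ R, w i = x i
      · rw [if_pos hQ, if_pos hR, if_pos ⟨hQ, hR⟩]
      · rw [if_pos hQ, if_neg hR, if_neg fun h => hR h.2, zero_div]
    · rw [if_neg hQ, if_neg fun h => hQ h.1, zero_div]
  funext w
  by_cases hM : marg ν R x = 0
  · simp only [cond, hM, div_zero, ite_self, zero_div]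
    split_ifs with hw
    · rw [eq_zero_of_marg_eq_zero hν hM (((hiff w).2 hw).2), zero_div]
    · rfl
  · simp only [cond, hmarg, ← hiff w]
    split_ifs <;> simp_all [div_div_div_cancel_right₀]

lemma Aop_cond (hν : ∀ x, 0 ≤ ν x) (hz : ∀ i ∈ R, z i = x i) (F : (∀ i, V i) → ℝ) :
    Aop (cond ν R x) Q F z = Aop ν (R ∪ Q) F z := by
  rw [Aop, Aop, cond_cond hν hz]

lemma expect_cond_Aop_union (hν : ∀ x, 0 ≤ ν x) (R Q : Finset (Fin k)) (x : ∀ i, V i)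
    (g : (∀ i, V i) → ℝ) : expect (cond ν R x) (Aop ν (R ∪ Q) g) = expect (cond ν R x) g :=
  (expect_congr_support fun _ hw => (Aop_cond hν (of_cond_ne_zero hw).2 g).symm).trans
    (expect_Aop (cond_nonneg hν R x) Q g)

lemma Aop_Aop_of_subset (hν : ∀ x, 0 ≤ ν x) (hRS : R ⊆ S) (h : (∀ i, V i) → ℝ)
    (z : ∀ i, V i) : Aop ν R (Aop ν S h) z = Aop ν R h z := by
  have hexp := expect_cond_Aop_union hν R S z h
  rwa [union_eq_right.2 hRS] at hexp

lemma normSq_eq_expect_normSq_cond (hν : ∀ x, 0 ≤ ν x) (Q : Finset (Fin k))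
    (F : (∀ i, V i) → ℝ) : normSq ν F = expect ν (fun z => normSq (cond ν Q z) F) :=
  (expect_Aop hν Q (fun w => F w ^ 2)).symm

lemma l2norm_le_of_cond_le (hν : IsProb ν) {F g : (∀ i, V i) → ℝ} {c : ℝ} (hc : 0 ≤ c)
    (h : ∀ z, ν z ≠ 0 → l2norm (cond ν Q z) F ≤ c * sd (cond ν Q z) g) :
    l2norm ν F ≤ c * sd ν g := by
  have hsq : normSq ν F ≤ c ^ 2 * var ν g := calc
    normSq ν F = expect ν (fun z => normSq (cond ν Q z) F) :=
        normSq_eq_expect_normSq_cond hν.1 Q F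
    _ ≤ expect ν (fun z => c ^ 2 * var (cond ν Q z) g) := expect_le_expect hν.1 fun z hz => by
        rw [← sq_l2norm (cond_nonneg hν.1 Q z), ← Real.sq_sqrt (var_cond_nonneg hν.1 Q z g),
          ← mul_pow]
        exact pow_le_pow_left₀ (Real.sqrt_nonneg _) (h z hz) 2
    _ = c ^ 2 * expect ν (fun z => var (cond ν Q z) g) := expect_mul_const_left _ _
    _ ≤ c ^ 2 * var ν g := mul_le_mul_of_nonneg_left (expect_var_cond_le hν Q g) (sq_nonneg c)
  rw [sd, ← Real.sqrt_sq hc, ← Real.sqrt_mul (sq_nonneg c)]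
  exact Real.sqrt_le_sqrt hsq

end Links

section EpsProduct

variable {k : ℕ} {V : Fin k → Type} [∀ i, Fintype (V i)] [∀ i, DecidableEq (V i)]
  {μ : (∀ i, V i) → ℝ} {ε : ℝ} {R : Finset (Fin k)} {x : ∀ i, V i}

lemma card_le_sub_two {i j : Fin k} (hi : i ∉ R) (hj : j ∉ R) (hij : i ≠ j) :
    R.card ≤ k - 2 := by
  have h := card_le_univ (insert i (insert j R))
  rw [card_insert_of_notMem (by simp [hij, hi]), card_insert_of_notMem hj, Fintype.card_fin] at h
  omega

lemma Junta.update_eq_of_cond_ne_zero {l : Fin k} {f : (∀ i, V i) → ℝ} (hf : Junta (R ∪ {l}) f)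
    {w : ∀ i, V i} (hw : cond μ R x w ≠ 0) : f (Function.update x l (w l)) = f w := by
  refine hf _ _ fun m hm => ?_
  by_cases hml : m = l
  · subst hml
    simp
  · rw [Function.update_of_ne hml]
    exact ((of_cond_ne_zero hw).2 m ((mem_union.1 hm).resolve_right (by simpa using hml))).symm

lemma abs_cov_cond_le_of_pair (hμ : ∀ x, 0 ≤ μ x) (hprod : EpsProduct μ ε)
    (hM : marg μ R x ≠ 0) {i j : Fin k} (hij : i ≠ j) (hi : i ∉ R) (hj : j ∉ R)
    {u v : (∀ i, V i) → ℝ} (hu : Junta (R ∪ {i}) u) (hv : Junta (R ∪ {j}) v) :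
    |cov (cond μ R x) u v| ≤ ε * (sd (cond μ R x) u * sd (cond μ R x) v) := by
  have hpair : |cov (cond μ R x) (fun w => u (Function.update x i (w i)))
      (fun w => v (Function.update x j (w j)))| ≤
      ε * Real.sqrt (var (cond μ R x) (fun w => u (Function.update x i (w i))) *
        var (cond μ R x) (fun w => v (Function.update x j (w j)))) :=
    hprod R (card_le_sub_two hi hj hij) x ((marg_nonneg hμ R x).lt_of_ne' hM) i j hi hj hij
      (fun a => u (Function.update x i a)) (fun b => v (Function.update x j b))
  have hu' := fun w (hw : cond μ R x w ≠ 0) => hu.update_eq_of_cond_ne_zero hw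
  have hv' := fun w (hw : cond μ R x w ≠ 0) => hv.update_eq_of_cond_ne_zero hw
  rwa [Real.sqrt_mul (var_nonneg (isProb_cond hμ hM) _), ← sd, ← sd, cov_congr_support hu' hv',
    sd_congr_support hu', sd_congr_support hv'] at hpair

lemma sd_cond_Aop_le (hμ : ∀ x, 0 ≤ μ x) {Q : Finset (Fin k)} {g : (∀ i, V i) → ℝ} {c : ℝ}
    (hc : 0 ≤ c) (h : |cov (cond μ R x) (Aop μ (R ∪ Q) g) g| ≤
      c * (sd (cond μ R x) (Aop μ (R ∪ Q) g) * sd (cond μ R x) g)) :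
    sd (cond μ R x) (Aop μ (R ∪ Q) g) ≤ c * sd (cond μ R x) g := by
  have hsupp : ∀ w, cond μ R x w ≠ 0 → Aop μ (R ∪ Q) g w = Aop (cond μ R x) Q g w :=
    fun w hw => (Aop_cond hμ (of_cond_ne_zero hw).2 g).symm
  have hvar : var (cond μ R x) (Aop μ (R ∪ Q) g) = cov (cond μ R x) (Aop μ (R ∪ Q) g) g := by
    rw [← cov_self, cov_congr_support hsupp hsupp, cov_Aop_Aop (cond_nonneg hμ R x),
      cov_congr_support (fun w hw => (hsupp w hw).symm) fun _ _ => rfl]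
  refine sd_le_of_var_le (mul_nonneg hc (Real.sqrt_nonneg _)) ?_
  rw [hvar]
  linarith [le_abs_self (cov (cond μ R x) (Aop μ (R ∪ Q) g) g)]

/-- Induction on `S`: conditioning on one `j ∈ S` splits the covariance into a term controlled by
the pseudorandomness of the pair `{i, j}` and the covariances in the links at `j`. -/
theorem abs_cov_cond_le (hμ : IsProb μ) (hε : 0 ≤ ε) (hprod : EpsProduct μ ε) {i : Fin k}
    {u g : (∀ i, V i) → ℝ} (S : Finset (Fin k)) :
    ∀ {R : Finset (Fin k)} {x : ∀ i, V i}, marg μ R x ≠ 0 → i ∉ S → i ∉ R → Disjoint S R →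
      Junta (R ∪ {i}) u → Junta (S ∪ R) g →
      |cov (cond μ R x) u g| ≤ S.card * ε * (sd (cond μ R x) u * sd (cond μ R x) g) := by
  induction S using Finset.induction_on with
  | empty =>
    intro R x hM _ _ _ _ hg
    have hconst : ∀ w, cond μ R x w ≠ 0 → g w = g x := fun w hw =>
      (hg.mono (empty_union R).le).eq_of_cond_ne_zero hw
    rw [cov_congr_support (fun _ _ => rfl) hconst, cov_const_right (isProb_cond hμ.1 hM).2]
    simp
  | insert j S hjS ih =>
    intro R x hM hiS hiR hSR hu hg
    have hν := isProb_cond hμ.1 hM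
    have hij : i ≠ j := fun h => hiS (h ▸ mem_insert_self j S)
    have hjR : j ∉ R := disjoint_left.1 hSR (mem_insert_self j S)
    have hAu : |cov (cond μ R x) (Aop (cond μ R x) {j} u) g| ≤
        ε * (sd (cond μ R x) u * sd (cond μ R x) g) := by
      rw [cov_congr_support (fun w hw => Aop_cond hμ.1 (of_cond_ne_zero hw).2 u) fun _ _ => rfl]
      have hcontract := sd_cond_Aop_le hμ.1 hε
        (abs_cov_cond_le_of_pair hμ.1 hprod hM hij.symm hjR hiR (Aop_junta μ _ u) hu)
      calc _ ≤ _ := abs_cov_le hν _ _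
        _ ≤ _ := mul_le_mul_of_nonneg_right hcontract (Real.sqrt_nonneg _)
        _ = _ := by ring
    have hlinks : |expect (cond μ R x) (fun z => cov (cond (cond μ R x) {j} z) u g)| ≤
        S.card * ε * (sd (cond μ R x) u * sd (cond μ R x) g) := by
      refine (abs_expect_le hν.1 (G := fun z => S.card * ε *
        (sd (cond (cond μ R x) {j} z) u * sd (cond (cond μ R x) {j} z) g)) fun z hz => ?_).trans ?_
      · rw [cond_cond hμ.1 (of_cond_ne_zero hz).2]
        exact ih (marg_ne_zero hμ.1 (of_cond_ne_zero hz).1 _) (fun h => hiS (mem_insert_of_mem h))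
          (by simp [hiR, hij]) (disjoint_union_right.2 ⟨(disjoint_insert_left.1 hSR).2, by simpa⟩)
          (hu.mono fun _ => by simp only [mem_union, mem_singleton]; tauto)
          (hg.mono fun _ => by simp only [mem_union, mem_insert, mem_singleton]; tauto)
      · rw [expect_mul_const_left]
        exact mul_le_mul_of_nonneg_left (expect_sd_mul_sd_cond_le hν {j} u g) (by positivity)
    rw [cov_eq_cov_Aop_add hν {j}, card_insert_of_notMem hjS]
    calc _ ≤ _ := abs_add_le _ _
      _ ≤ _ := add_le_add hAu hlinks
      _ = _ := by push_cast; ring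

lemma sd_cond_Aop_singleton_le (hμ : IsProb μ) (hε : 0 ≤ ε) (hprod : EpsProduct μ ε)
    {i : Fin k} {S : Finset (Fin k)} {g : (∀ i, V i) → ℝ} (hM : marg μ R x ≠ 0) (hiS : i ∉ S)
    (hiR : i ∉ R) (hSR : Disjoint S R) (hg : Junta (S ∪ R) g) :
    sd (cond μ R x) (Aop μ (R ∪ {i}) g) ≤ S.card * ε * sd (cond μ R x) g :=
  sd_cond_Aop_le hμ.1 (by positivity)
    (abs_cov_cond_le hμ hε hprod S hM hiS hiR hSR (Aop_junta μ _ g) hg)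

/-- Induction on `T`: the last coordinate `i` of `T` is handled by `sd_cond_Aop_singleton_le`, the
others in the links at `i` (by induction) together with the law of total variance. -/
theorem l2norm_cond_Aop_union_sub_le (hμ : IsProb μ) (hε : 0 ≤ ε) (hprod : EpsProduct μ ε)
    {S : Finset (Fin k)} {g : (∀ i, V i) → ℝ} (T : Finset (Fin k)) :
    ∀ {R : Finset (Fin k)} {x : ∀ i, V i}, marg μ R x ≠ 0 → Disjoint T S → Disjoint T R →
      Disjoint S R → Junta (S ∪ R) g →
      l2norm (cond μ R x) (fun z => Aop μ (R ∪ T) g z - Aop μ R g z) ≤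
        T.card * S.card * ε * sd (cond μ R x) g := by
  induction T using Finset.induction_on with
  | empty => intro R x _ _ _ _ _; simp [l2norm, normSq]
  | insert i T hiT ih =>
    intro R x hM hTS hTR hSR hg
    have hν := isProb_cond hμ.1 hM
    have hiS : i ∉ S := disjoint_left.1 hTS (mem_insert_self i T)
    have hiR : i ∉ R := disjoint_left.1 hTR (mem_insert_self i T)
    have hfar : l2norm (cond μ R x) (fun z => Aop μ (R ∪ {i} ∪ T) g z - Aop μ (R ∪ {i}) g z) ≤
        T.card * S.card * ε * sd (cond μ R x) g := by
      refine l2norm_le_of_cond_le hν (Q := {i}) (by positivity) fun z hz => ?_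
      rw [cond_cond hμ.1 (of_cond_ne_zero hz).2]
      exact ih (marg_ne_zero hμ.1 (of_cond_ne_zero hz).1 _) (disjoint_insert_left.1 hTS).2
        (disjoint_union_right.2 ⟨(disjoint_insert_left.1 hTR).2, disjoint_singleton_right.2 hiT⟩)
        (disjoint_union_right.2 ⟨hSR, disjoint_singleton_right.2 hiS⟩)
        (hg.mono (union_subset_union_right subset_union_left))
    have hnear : l2norm (cond μ R x) (fun z => Aop μ (R ∪ {i}) g z - Aop μ R g z) ≤
        S.card * ε * sd (cond μ R x) g := by
      have hmean : ∀ z, cond μ R x z ≠ 0 →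
          Aop μ R g z = expect (cond μ R x) (Aop μ (R ∪ {i}) g) := fun z hz => by
        rw [Aop_junta μ R g z x (of_cond_ne_zero hz).2]
        exact (expect_cond_Aop_union hμ.1 R {i} x g).symm
      rw [l2norm_congr_support fun z hz => by rw [hmean z hz], ← sd_eq_l2norm_sub hν]
      exact sd_cond_Aop_singleton_le hμ hε hprod hM hiS hiR hSR hg
    calc _ = l2norm (cond μ R x) (fun z => (Aop μ (R ∪ {i} ∪ T) g z - Aop μ (R ∪ {i}) g z) +
            (Aop μ (R ∪ {i}) g z - Aop μ R g z)) := by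
          rw [insert_eq, ← union_assoc]
          simp only [sub_add_sub_cancel]
      _ ≤ _ := l2norm_add_le hν.1 _ _
      _ ≤ _ := add_le_add hfar hnear
      _ = _ := by rw [card_insert_of_notMem hiT]; push_cast; ring

/-- Conditioned on the coordinates in `S ∩ T`, this averages an `S ∖ T`-junta over the disjoint set
`T ∖ S`. -/
theorem l2norm_Aop_Aop_sub_le (hμ : IsProb μ) (hε : 0 ≤ ε) (hprod : EpsProduct μ ε)
    (S T : Finset (Fin k)) (h : (∀ i, V i) → ℝ) :
    l2norm μ (fun x => Aop μ T (Aop μ S h) x - Aop μ (S ∩ T) h x) ≤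
      T.card * S.card * ε * l2norm μ h := by
  set R := S ∩ T
  have hRS : R ⊆ S := inter_subset_left
  have hRT : R ⊆ T := inter_subset_right
  have hdisj : Disjoint (T \ R) (S \ R) := disjoint_left.2 fun a ha hb =>
    (mem_sdiff.1 ha).2 (mem_inter.2 ⟨(mem_sdiff.1 hb).1, (mem_sdiff.1 ha).1⟩)
  have hjunta : Junta ((S \ R) ∪ R) (Aop μ S h) := by
    rw [sdiff_union_of_subset hRS]
    exact Aop_junta μ S h
  have hsplit : (fun x => Aop μ T (Aop μ S h) x - Aop μ R h x) =
      fun x => Aop μ (R ∪ (T \ R)) (Aop μ S h) x - Aop μ R (Aop μ S h) x := by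
    funext x
    rw [union_sdiff_of_subset hRT, Aop_Aop_of_subset hμ.1 hRS]
  calc _ ≤ T.card * S.card * ε * sd μ (Aop μ S h) := by
        rw [hsplit]
        refine l2norm_le_of_cond_le hμ (Q := R) (by positivity) fun x hx =>
          (l2norm_cond_Aop_union_sub_le hμ hε hprod (T \ R) (marg_ne_zero hμ.1 hx R) hdisj
            sdiff_disjoint sdiff_disjoint hjunta).trans ?_
        gcongr
        exacts [Real.sqrt_nonneg _, sdiff_subset, sdiff_subset]
    _ ≤ T.card * S.card * ε * l2norm μ h := by
        gcongr
        exact (sd_le_l2norm _).trans (Real.sqrt_le_sqrt (normSq_Aop_le hμ.1 S h))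

end EpsProduct

lemma sum_powerset_neg_one_pow_mul_eq_zero {α : Type*} [DecidableEq α] {T : Finset α} {i : α}
    (hi : i ∈ T) (G : Finset α → ℝ) (hG : ∀ A, i ∉ A → G (insert i A) = G A) :
    ∑ A ∈ T.powerset, (-1 : ℝ) ^ (T.card - A.card) * G A = 0 := by
  rw [← insert_erase hi, sum_powerset_insert (notMem_erase i T), ← sum_add_distrib]
  refine sum_eq_zero fun A hA => ?_
  have hiA : i ∉ A := fun h => notMem_erase i T (mem_powerset.1 hA h)
  have hcard : A.card ≤ (T.erase i).card := card_le_card (mem_powerset.1 hA)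
  rw [hG A hiA, card_insert_of_notMem hiA, card_insert_of_notMem (notMem_erase i T),
    show (T.erase i).card + 1 - A.card = (T.erase i).card - A.card + 1 by omega, pow_succ,
    Nat.add_sub_add_right]
  ring

lemma two_pow_mul_two_pow_mul_self_le {a b k : ℕ} (ha : a ≤ k) (hb : b ≤ k) :
    2 ^ a * 2 ^ b * (k * k) ≤ 2 ^ (4 * k) := by
  have hk : k ≤ 2 ^ k := Nat.lt_two_pow_self.le
  calc 2 ^ a * 2 ^ b * (k * k) ≤ 2 ^ k * 2 ^ k * (2 ^ k * 2 ^ k) := by gcongr <;> omega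
    _ = 2 ^ (4 * k) := by ring

section EfronStein

variable {k : ℕ} {V : Fin k → Type} [∀ i, Fintype (V i)] [∀ i, DecidableEq (V i)]

lemma ES_ES_eq (μ : (∀ i, V i) → ℝ) (S T : Finset (Fin k)) (f : (∀ i, V i) → ℝ)
    (x : ∀ i, V i) :
    ES μ T (ES μ S f) x = ∑ T' ∈ T.powerset, ∑ S' ∈ S.powerset,
      (-1 : ℝ) ^ (T.card - T'.card) * (-1) ^ (S.card - S'.card) * Aop μ T' (Aop μ S' f) x := by
  simp only [ES, Aop, mul_sum]
  refine sum_congr rfl fun T' _ => ?_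
  rw [sum_comm]
  exact sum_congr rfl fun S' _ => sum_congr rfl fun w _ => sum_congr rfl fun y _ => by ring

/-- For product measures `A_{T'} A_{S'} = A_{S' ∩ T'}`, and this identity then says that
`(f^{=S})^{=T} = [T = S] f^{=S}`. -/
lemma sum_sign_Aop_inter (μ : (∀ i, V i) → ℝ) (S T : Finset (Fin k)) (f : (∀ i, V i) → ℝ)
    (x : ∀ i, V i) :
    ∑ T' ∈ T.powerset, ∑ S' ∈ S.powerset,
      (-1 : ℝ) ^ (T.card - T'.card) * (-1) ^ (S.card - S'.card) * Aop μ (S' ∩ T') f x =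
        if T = S then ES μ S f x else 0 := by
  by_cases hST : S ⊆ T
  · rw [sum_comm, sum_eq_single S]
    · split_ifs with hTS
      · subst hTS
        refine sum_congr rfl fun T' hT' => ?_
        rw [Nat.sub_self, pow_zero, mul_one, inter_eq_right.2 (mem_powerset.1 hT')]
      · obtain ⟨i, hiT, hiS⟩ := not_subset.1 fun h => hTS (subset_antisymm h hST)
        refine (sum_congr rfl fun T' _ => by ring).trans (sum_powerset_neg_one_pow_mul_eq_zero hiT
          (fun A => (-1) ^ (S.card - S.card) * Aop μ (S ∩ A) f x) fun A _ => ?_)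
        rw [inter_insert_of_notMem hiS]
    · intro S' hS' hS'S
      obtain ⟨i, hiS, hiS'⟩ := not_subset.1 fun h => hS'S (subset_antisymm (mem_powerset.1 hS') h)
      refine (sum_congr rfl fun T' _ => by ring).trans (sum_powerset_neg_one_pow_mul_eq_zero
        (hST hiS) (fun A => (-1) ^ (S.card - S'.card) * Aop μ (S' ∩ A) f x) fun A _ => ?_)
      rw [inter_insert_of_notMem hiS']
    · exact fun h => absurd (mem_powerset_self S) h
  · rw [if_neg fun h => hST (by rw [h])]
    obtain ⟨i, hiS, hiT⟩ := not_subset.1 hST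
    refine sum_eq_zero fun T' hT' => ?_
    have hiT' : i ∉ T' := fun h => hiT (mem_powerset.1 hT' h)
    refine (sum_congr rfl fun S' _ => by ring).trans (sum_powerset_neg_one_pow_mul_eq_zero hiS
      (fun A => (-1) ^ (T.card - T'.card) * Aop μ (A ∩ T') f x) fun A _ => ?_)
    rw [insert_inter_of_notMem hiT']

lemma ES_ES_sub_eq (μ : (∀ i, V i) → ℝ) (S T : Finset (Fin k)) (f : (∀ i, V i) → ℝ)
    (x : ∀ i, V i) :
    ES μ T (ES μ S f) x - (if T = S then ES μ S f x else 0) =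
      ∑ T' ∈ T.powerset, ∑ S' ∈ S.powerset, (-1 : ℝ) ^ (T.card - T'.card) *
        (-1) ^ (S.card - S'.card) * (Aop μ T' (Aop μ S' f) x - Aop μ (S' ∩ T') f x) := by
  rw [ES_ES_eq, ← sum_sign_Aop_inter]
  simp only [mul_sub, sum_sub_distrib]

variable {μ : (∀ i, V i) → ℝ} {ε : ℝ}

theorem l2norm_ES_ES_sub_le (hμ : IsProb μ) (hε : 0 ≤ ε) (hprod : EpsProduct μ ε)
    (f : (∀ i, V i) → ℝ) (S T : Finset (Fin k)) :
    l2norm μ (fun x => ES μ T (ES μ S f) x - if T = S then ES μ S f x else 0) ≤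
      2 ^ (4 * k) * ε * l2norm μ f := by
  have hterm : ∀ T' S' : Finset (Fin k), l2norm μ (fun x => (-1 : ℝ) ^ (T.card - T'.card) *
      (-1) ^ (S.card - S'.card) * (Aop μ T' (Aop μ S' f) x - Aop μ (S' ∩ T') f x)) ≤
        k * k * ε * l2norm μ f := fun T' S' => by
    rw [l2norm_const_mul, abs_mul, abs_pow, abs_pow, abs_neg, abs_one, one_pow, one_pow, one_mul,
      one_mul]
    refine (l2norm_Aop_Aop_sub_le hμ hε hprod S' T' f).trans ?_
    have hT' := card_le_univ T'
    have hS' := card_le_univ S'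
    rw [Fintype.card_fin] at hT' hS'
    gcongr
    exact Real.sqrt_nonneg _
  simp only [ES_ES_sub_eq]
  calc _ ≤ ∑ T' ∈ T.powerset, ∑ S' ∈ S.powerset, l2norm μ (fun x => (-1 : ℝ) ^ (T.card - T'.card) *
        (-1) ^ (S.card - S'.card) * (Aop μ T' (Aop μ S' f) x - Aop μ (S' ∩ T') f x)) :=
        (l2norm_sum_le hμ.1 _ _).trans (sum_le_sum fun T' _ => l2norm_sum_le hμ.1 _ _)
    _ ≤ ∑ T' ∈ T.powerset, ∑ S' ∈ S.powerset, k * k * ε * l2norm μ f :=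
        sum_le_sum fun T' _ => sum_le_sum fun S' _ => hterm T' S'
    _ = ((2 ^ T.card * 2 ^ S.card * (k * k) : ℕ) : ℝ) * ε * l2norm μ f := by
        simp only [sum_const, card_powerset, nsmul_eq_mul]
        push_cast
        ring
    _ ≤ 2 ^ (4 * k) * ε * l2norm μ f := by
        gcongr
        · exact Real.sqrt_nonneg _
        · exact_mod_cast two_pow_mul_two_pow_mul_self_le
            ((card_le_univ T).trans_eq (Fintype.card_fin k))
            ((card_le_univ S).trans_eq (Fintype.card_fin k))

end EfronStein

theorem statement16_general (k : ℕ)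
    (V : Fin k → Type) [∀ i, Fintype (V i)] [∀ i, DecidableEq (V i)]
    (μ : (∀ i, V i) → ℝ) (ε : ℝ) (hε : 0 ≤ ε) (hμ : IsProb μ) (hprod : EpsProduct μ ε)
    (f : (∀ i, V i) → ℝ) (S : Finset (Fin k)) :
    (∀ T : Finset (Fin k), T ≠ S →
        normSq μ (ES μ T (ES μ S f)) ≤ 2 ^ (8 * k) * ε ^ 2 * normSq μ f) ∧
      normSq μ (fun x => ES μ S (ES μ S f) x - ES μ S f x) ≤
        2 ^ (10 * k) * ε ^ 2 * normSq μ f := by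
  have key : ∀ T, normSq μ (fun x => ES μ T (ES μ S f) x - if T = S then ES μ S f x else 0) ≤
      2 ^ (8 * k) * ε ^ 2 * normSq μ f := fun T => by
    rw [← sq_l2norm hμ.1, ← sq_l2norm hμ.1,
      show (2 : ℝ) ^ (8 * k) * ε ^ 2 = (2 ^ (4 * k) * ε) ^ 2 by ring, ← mul_pow]
    exact pow_le_pow_left₀ (Real.sqrt_nonneg _) (l2norm_ES_ES_sub_le hμ hε hprod f S T) 2
  refine ⟨fun T hTS => by simpa [hTS] using key T, ?_⟩
  calc _ ≤ 2 ^ (8 * k) * ε ^ 2 * normSq μ f := by simpa using key S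
    _ ≤ _ := by
      gcongr
      · exact normSq_nonneg hμ.1 f
      · norm_num
      · omega

theorem statement16 (k : ℕ) (hk : 1 ≤ k)
    (V : Fin k → Type) [∀ i, Fintype (V i)] [∀ i, DecidableEq (V i)]
    (μ : (∀ i, V i) → ℝ) (ε : ℝ) (hε : 0 ≤ ε) (hμ : IsProb μ) (hprod : EpsProduct μ ε)
    (f : (∀ i, V i) → ℝ) (S : Finset (Fin k)) :
    (∀ T : Finset (Fin k), T ≠ S →
        normSq μ (ES μ T (ES μ S f)) ≤ 2 ^ (8 * k) * ε ^ 2 * normSq μ f) ∧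
      normSq μ (fun x => ES μ S (ES μ S f) x - ES μ S f x) ≤
        2 ^ (10 * k) * ε ^ 2 * normSq μ f :=
  statement16_general k V μ ε hε hμ hprod f S

end GLL
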